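/- arXiv:2209.01687 — 2 statements merged into one kernel-verified Lean document; each statement's English description precedes it below -/
import Mathlib

section
/- Fix a model f : X → [0,1], a group g : X → {0,1} with μ(g) = Pr_{(x,y)∼D}[g(x)=1] > 0, and let Δ = E[y | g(x)=1] − E[f(x) | g(x)=1]. Define the patched model f'(x) = f(x) + Δ if g(x)=1 and f'(x) = f(x) otherwise. Then B(f) − B(f') = μ(g) · Δ². -/
/-!
Shifting `f` by a constant `c` on `S` changes the squared error at `(x, y)`, `x ∈ S`, by
`-2c (f x - y) - c²`; summing, `B(f) - B(f') = 2c · E[(y - f x) 1_S] - c² μ(S)`.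
For `c = Δ` the expectation is `μ(S) Δ`, which leaves `μ(S) Δ²`.
-/

open scoped Classical
open Finset

noncomputable section

/-- Brier score of a model `f` under a weighted distribution `D` on `X × {0,1}`. -/
def brier {X : Type*} [Fintype X] (D : X → Bool → ℝ) (f : X → ℝ) : ℝ :=
  ∑ x, ∑ y, D x y * (f x - (if y then 1 else 0)) ^ 2

/-- Mass of a set `S ⊆ X` under the marginal of `D`. -/
def mass {X : Type*} [Fintype X] (D : X → Bool → ℝ) (S : Set X) : ℝ :=
  ∑ x, if x ∈ S then D x true + D x false else 0

/-- Conditional expectation of the label `y` given `x ∈ S`. -/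
def condY {X : Type*} [Fintype X] (D : X → Bool → ℝ) (S : Set X) : ℝ :=
  (∑ x, if x ∈ S then D x true else 0) / mass D S

/-- Conditional expectation of `f x` given `x ∈ S`. -/
def condExp {X : Type*} [Fintype X] (D : X → Bool → ℝ) (f : X → ℝ) (S : Set X) : ℝ :=
  (∑ x, if x ∈ S then (D x true + D x false) * f x else 0) / mass D S

def residualOn {X : Type*} [Fintype X] (D : X → Bool → ℝ) (f : X → ℝ) (S : Set X) : ℝ :=
  ∑ x, if x ∈ S then D x true - (D x true + D x false) * f x else 0

section

variable {X : Type*} [Fintype X] (D : X → Bool → ℝ) (f : X → ℝ) (S : Set X)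

theorem mass_mul_condY_sub_condExp (hS : mass D S ≠ 0) :
    mass D S * (condY D S - condExp D f S) = residualOn D f S := by
  rw [condY, condExp, ← sub_div, mul_div_cancel₀ _ hS, residualOn, ← sum_sub_distrib]
  exact sum_congr rfl fun x _ => by split_ifs <;> simp

theorem brier_sub_brier_shift (c : ℝ) :
    brier D f - brier D (fun x => if x ∈ S then f x + c else f x)
      = 2 * c * residualOn D f S - c ^ 2 * mass D S := by
  rw [brier, brier, residualOn, mass, mul_sum, mul_sum, ← sum_sub_distrib, ← sum_sub_distrib]
  refine sum_congr rfl fun x _ => ?_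
  split_ifs
  · simp only [Fintype.sum_bool, if_true, Bool.false_eq_true, if_false]
    ring
  · simp

end

theorem patch_improvement_general {X : Type*} [Fintype X] (D : X → Bool → ℝ)
    (f : X → ℝ) (g : X → Bool) (μ Δ : ℝ)
    (hμ : μ = mass D {x | g x = true}) (hμpos : 0 < μ)
    (hΔ : Δ = condY D {x | g x = true} - condExp D f {x | g x = true}) :
    brier D f - brier D (fun x => if g x then f x + Δ else f x) = μ * Δ ^ 2 := by
  have hres : residualOn D f {x | g x = true} = μ * Δ := by
    rw [hμ, hΔ, mass_mul_condY_sub_condExp D f _ (hμ ▸ hμpos.ne')]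
  have hshift := brier_sub_brier_shift D f {x | g x = true} Δ
  rw [hres, ← hμ] at hshift
  convert hshift using 1
  · congr!
  · ring

/-- the patch operation reduces the Brier score by exactly `μ(g)·Δ²`. -/
theorem patch_improvement {X : Type*} [Fintype X] (D : X → Bool → ℝ)
    (hD : ∀ x y, 0 ≤ D x y) (hsum : ∑ x, (D x true + D x false) = 1)
    (f : X → ℝ) (g : X → Bool) (μ Δ : ℝ)
    (hμ : μ = mass D {x | g x = true}) (hμpos : 0 < μ)
    (hΔ : Δ = condY D {x | g x = true} - condExp D f {x | g x = true}) :
    brier D f - brier D (fun x => if g x then f x + Δ else f x) = μ * Δ ^ 2 :=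
  patch_improvement_general D f g μ Δ hμ hμpos hΔ
end
end

section
/- Let f₁, f₂ : X → [0,1] and ε > 0. Let U> = {x : f₁(x) − f₂(x) > ε} and U< = {x : f₂(x) − f₁(x) > ε}, and suppose μ(U> ∪ U<) = α > 0 under the marginal of D on X. Then there exist a choice of bullet ∈ {>, <} and i ∈ {1,2} such that μ(U_bullet) · (E[y | x ∈ U_bullet] − E[f_i(x) | x ∈ U_bullet])² ≥ αε²/8. -/
open scoped Classical
open Finset

noncomputable section

/-! Both models differ by more than `ε` on `U`, so their conditional means on `U` differ by at
least `ε`, and the conditional label mean is at distance at least `ε / 2` from one of them. The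
two disagreement regions are disjoint, so one of them carries at least half of the mass `α`. -/

section

variable {X : Type*} [Fintype X] {D : X → Bool → ℝ}

theorem mass_union_of_disjoint {S T : Set X} (h : Disjoint S T) :
    mass D (S ∪ T) = mass D S + mass D T := by
  simp only [mass, ← sum_add_distrib]
  refine sum_congr rfl fun x _ => ?_
  by_cases hS : x ∈ S
  · simp [hS, Set.disjoint_left.mp h hS]
  · simp [hS]

theorem mass_nonneg (hD : ∀ x y, 0 ≤ D x y) (S : Set X) : 0 ≤ mass D S :=
  sum_nonneg fun x _ => by split_ifs <;> simp [add_nonneg (hD x true) (hD x false)]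

theorem condExp_sub_condExp (f g : X → ℝ) (S : Set X) :
    condExp D f S - condExp D g S = condExp D (f - g) S := by
  simp only [condExp, div_sub_div_same, ← sum_sub_distrib]
  congr 1
  refine sum_congr rfl fun x _ => ?_
  split_ifs <;> simp [mul_sub]

theorem le_condExp (hD : ∀ x y, 0 ≤ D x y) {f : X → ℝ} {S : Set X} {c : ℝ}
    (hf : ∀ x ∈ S, c ≤ f x) (hS : 0 < mass D S) : c ≤ condExp D f S := by
  rw [condExp, le_div_iff₀ hS, mass, mul_comm, sum_mul]
  gcongr with x
  split_ifs with hx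
  · exact mul_le_mul_of_nonneg_left (hf x hx) (add_nonneg (hD x true) (hD x false))
  · simp

theorem quarter_sq_le_sq_sub_or_sq_sub {ε a b : ℝ} (hε : 0 ≤ ε) (hab : ε ≤ a - b) (c : ℝ) :
    ε ^ 2 / 4 ≤ (c - a) ^ 2 ∨ ε ^ 2 / 4 ≤ (c - b) ^ 2 := by
  rcases le_or_gt (ε / 2) (c - b) with h | h
  · right; nlinarith
  · left; nlinarith

theorem exists_mass_mul_sq_condY_sub_condExp_ge (hD : ∀ x y, 0 ≤ D x y) {f₁ f₂ : X → ℝ}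
    {ε : ℝ} (hε : 0 ≤ ε) {U : Set X} (hU : ∀ x ∈ U, ε ≤ f₁ x - f₂ x) :
    ∃ f ∈ ({f₁, f₂} : Set (X → ℝ)),
      mass D U * ε ^ 2 / 4 ≤ mass D U * (condY D U - condExp D f U) ^ 2 := by
  rcases eq_or_ne (mass D U) 0 with h0 | h0
  · exact ⟨f₁, Set.mem_insert _ _, by simp [h0]⟩
  have hpos : 0 < mass D U := (mass_nonneg hD U).lt_of_ne h0.symm
  have hgap : ε ≤ condExp D f₁ U - condExp D f₂ U :=
    condExp_sub_condExp f₁ f₂ U ▸ le_condExp hD hU hpos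
  rw [mul_div_assoc]
  rcases quarter_sq_le_sq_sub_or_sq_sub hε hgap (condY D U) with h | h
  · exact ⟨f₁, Set.mem_insert _ _, by gcongr⟩
  · exact ⟨f₂, Set.mem_insert_of_mem _ rfl, by gcongr⟩

end

theorem disagreement_falsifies_general {X : Type*} [Fintype X] (D : X → Bool → ℝ)
    (hD : ∀ x y, 0 ≤ D x y) (f₁ f₂ : X → ℝ) (ε α : ℝ) (hε : 0 < ε)
    (hα : α = mass D ({x | f₁ x - f₂ x > ε} ∪ {x | f₂ x - f₁ x > ε})) :
    ∃ U ∈ ({{x | f₁ x - f₂ x > ε}, {x | f₂ x - f₁ x > ε}} : Set (Set X)),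
      ∃ f ∈ ({f₁, f₂} : Set (X → ℝ)),
        mass D U * (condY D U - condExp D f U) ^ 2 ≥ α * ε ^ 2 / 8 := by
  set U₁ : Set X := {x | f₁ x - f₂ x > ε}
  set U₂ : Set X := {x | f₂ x - f₁ x > ε}
  have hdisj : Disjoint U₁ U₂ :=
    Set.disjoint_left.mpr fun x (h₁ : _ > ε) (h₂ : _ > ε) => by linarith
  rw [mass_union_of_disjoint hdisj] at hα
  rcases le_or_gt (α / 2) (mass D U₁) with hbig | hbig
  · obtain ⟨f, hf, hgap⟩ :=
      exists_mass_mul_sq_condY_sub_condExp_ge hD hε.le (U := U₁) fun x hx => le_of_lt hx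
    refine ⟨U₁, Set.mem_insert _ _, f, hf, ?_⟩
    nlinarith
  · obtain ⟨f, hf, hgap⟩ :=
      exists_mass_mul_sq_condY_sub_condExp_ge hD hε.le (U := U₂) fun x hx => le_of_lt hx
    refine ⟨U₂, Set.mem_insert_of_mem _ rfl, f, Set.pair_comm f₁ f₂ ▸ hf, ?_⟩
    nlinarith

/-- a large disagreement region witnesses a large group conditional
mean-consistency violation for one of the two models on one of the two pieces. -/
theorem disagreement_falsifies {X : Type*} [Fintype X] (D : X → Bool → ℝ)
    (hD : ∀ x y, 0 ≤ D x y) (hsum : ∑ x, (D x true + D x false) = 1)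
    (f₁ f₂ : X → ℝ) (hf₁ : ∀ x, f₁ x ∈ Set.Icc (0 : ℝ) 1) (hf₂ : ∀ x, f₂ x ∈ Set.Icc (0 : ℝ) 1)
    (ε α : ℝ) (hε : 0 < ε)
    (hα : α = mass D ({x | f₁ x - f₂ x > ε} ∪ {x | f₂ x - f₁ x > ε})) (hαpos : 0 < α) :
    ∃ U ∈ ({{x | f₁ x - f₂ x > ε}, {x | f₂ x - f₁ x > ε}} : Set (Set X)),
      ∃ f ∈ ({f₁, f₂} : Set (X → ℝ)),
        mass D U * (condY D U - condExp D f U) ^ 2 ≥ α * ε ^ 2 / 8 :=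
  disagreement_falsifies_general D hD f₁ f₂ ε α hε hα
end
end
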